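/- Weber's Bessel function of order zero, Y₀(x) = (2/π)[(ln(x/2) + γ) J₀(x) − ∑_{n=0}^∞ (−1)ⁿ φ(n) x²ⁿ / (2²ⁿ (n!)²)], is well defined and twice differentiable on (0,∞) and satisfies Bessel's equation of order zero: x Y₀''(x) + Y₀'(x) + x Y₀(x) = 0 for all x > 0. -/

import Mathlib

/-- The Bessel function of the first kind of order zero,
`J₀(x) = ∑ (−1)ⁿ x²ⁿ / (2²ⁿ (n!)²)`. -/
noncomputable def besselJ0 (x : ℝ) : ℝ :=
  ∑' n : ℕ, (-1 : ℝ) ^ n * x ^ (2 * n) / (2 ^ (2 * n) * ((n.factorial : ℝ)) ^ 2)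

/-- `φ(n) = ∑_{m=1}^n 1/m`, with `φ(0) = 0`. -/
noncomputable def harmonicPhi (n : ℕ) : ℝ :=
  ∑ m ∈ Finset.range n, (1 : ℝ) / (m + 1)

/-- Weber's Bessel function of order zero,
`Y₀(x) = (2/π)[(ln(x/2) + γ) J₀(x) − ∑ (−1)ⁿ φ(n) x²ⁿ / (2²ⁿ (n!)²)]`. -/
noncomputable def besselY0 (x : ℝ) : ℝ :=
  (2 / Real.pi) *
    ((Real.log (x / 2) + Real.eulerMascheroniConstant) * besselJ0 x -
      ∑' n : ℕ, (-1 : ℝ) ^ n * harmonicPhi n * x ^ (2 * n) /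
        (2 ^ (2 * n) * ((n.factorial : ℝ)) ^ 2))

/-- The modified Bessel function of the first kind of order zero,
`I₀(x) = ∑ x²ⁿ / (2²ⁿ (n!)²)`. -/
noncomputable def besselI0 (x : ℝ) : ℝ :=
  ∑' n : ℕ, x ^ (2 * n) / (2 ^ (2 * n) * ((n.factorial : ℝ)) ^ 2)

/-- The modified Bessel function of the second kind of order zero,
`K₀(x) = −(ln(x/2) + γ) I₀(x) + ∑ φ(n) x²ⁿ / (2²ⁿ (n!)²)`. -/
noncomputable def besselK0 (x : ℝ) : ℝ :=
  -(Real.log (x / 2) + Real.eulerMascheroniConstant) * besselI0 x +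
    ∑' n : ℕ, harmonicPhi n * x ^ (2 * n) / (2 ^ (2 * n) * ((n.factorial : ℝ)) ^ 2)

/-!
Put `s = (x / 2)²`. Then `J₀(x) = A(s)` and the `φ`-series is `B(s)` for the entire power series
`A = ∑ (-1)ⁿ sⁿ / (n!)²` and `B = ∑ (-1)ⁿ φ(n) sⁿ / (n!)²`, so `Y₀(x) = (2/π) W(s)` with
`W = (½ log s + γ) A - B`, and Bessel's equation of order zero becomes `s W'' + W' + W = 0`.
On coefficients, `s u'' + u' + u` sends `cₙ` to `(n + 1)² cₙ₊₁ + cₙ`. This vanishes for `A`, and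
since `φ(n + 1) = φ(n) + 1/(n + 1)` it turns `B` into `A'`. In `s W'' + W' + W` the terms with
`log s` vanish because `A` solves the equation, those with `A / s` cancel, and what remains is
`A' - (s B'' + B' + B) = 0`.
-/

open Real Filter Topology
open scoped Nat

noncomputable section

def ExpTypeCoeffs (c : ℕ → ℝ) : Prop :=
  ∃ C K : ℝ, ∀ n, |c n| ≤ C * K ^ n / n !

def seriesSum (c : ℕ → ℝ) (t : ℝ) : ℝ :=
  ∑' n, c n * t ^ n

def derivCoeff (c : ℕ → ℝ) (n : ℕ) : ℝ :=
  (n + 1) * c (n + 1)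

section PowerSeries

variable {c : ℕ → ℝ}

theorem ExpTypeCoeffs.summable_abs_mul_pow (hc : ExpTypeCoeffs c) (r : ℝ) :
    Summable fun n => |c n| * |r| ^ n := by
  obtain ⟨C, K, hCK⟩ := hc
  refine .of_nonneg_of_le (fun n => by positivity) (fun n => ?_)
    ((Real.summable_pow_div_factorial (K * |r|)).mul_left C)
  calc |c n| * |r| ^ n ≤ C * K ^ n / n ! * |r| ^ n := by gcongr; exact hCK n
    _ = C * ((K * |r|) ^ n / n !) := by ring

theorem ExpTypeCoeffs.hasSum_seriesSum (hc : ExpTypeCoeffs c) (t : ℝ) :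
    HasSum (fun n => c n * t ^ n) (seriesSum c t) :=
  (Summable.of_norm_bounded (hc.summable_abs_mul_pow t) fun n => by
    rw [norm_mul, norm_pow, Real.norm_eq_abs, Real.norm_eq_abs]).hasSum

theorem ExpTypeCoeffs.expTypeCoeffs_derivCoeff (hc : ExpTypeCoeffs c) :
    ExpTypeCoeffs (derivCoeff c) := by
  obtain ⟨C, K, hCK⟩ := hc
  refine ⟨C * K, K, fun n => ?_⟩
  calc |derivCoeff c n| = (n + 1) * |c (n + 1)| := by
        rw [derivCoeff, abs_mul, abs_of_pos (by positivity)]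
    _ ≤ (n + 1) * (C * K ^ (n + 1) / (n + 1)!) := by gcongr; exact hCK (n + 1)
    _ = C * K * K ^ n / n ! := by
        rw [Nat.factorial_succ]; push_cast; field_simp; ring

theorem ExpTypeCoeffs.hasDerivAt_seriesSum (hc : ExpTypeCoeffs c) (t : ℝ) :
    HasDerivAt (seriesSum c) (seriesSum (derivCoeff c) t) t := by
  have hsplit : seriesSum c = fun y => c 0 + ∑' n, c (n + 1) * y ^ (n + 1) := by
    funext y
    rw [seriesSum, (hc.hasSum_seriesSum y).summable.tsum_eq_zero_add, pow_zero, mul_one]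
  rw [hsplit]
  refine HasDerivAt.const_add _ ?_
  set R := |t| + 1
  have ht : t ∈ Metric.ball (0 : ℝ) R := by simp [R]
  have hu : Summable fun n => |derivCoeff c n| * |R| ^ n :=
    hc.expTypeCoeffs_derivCoeff.summable_abs_mul_pow R
  have h0 : Summable fun n => c (n + 1) * t ^ (n + 1) :=
    (summable_nat_add_iff 1).2 (hc.hasSum_seriesSum t).summable
  have hterm_deriv : ∀ n (y : ℝ), y ∈ Metric.ball (0 : ℝ) R →
      HasDerivAt (fun y => c (n + 1) * y ^ (n + 1)) (derivCoeff c n * y ^ n) y := by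
    intro n y _
    refine ((hasDerivAt_pow (n + 1) y).const_mul (c (n + 1))).congr_deriv ?_
    rw [derivCoeff, Nat.add_sub_cancel]; push_cast; ring
  have hterm_bound : ∀ n (y : ℝ), y ∈ Metric.ball (0 : ℝ) R →
      ‖derivCoeff c n * y ^ n‖ ≤ |derivCoeff c n| * |R| ^ n := by
    intro n y hy
    have hyR : |y| ≤ |R| := by
      rw [mem_ball_zero_iff, Real.norm_eq_abs] at hy
      exact hy.le.trans (le_abs_self R)
    rw [norm_mul, norm_pow, Real.norm_eq_abs, Real.norm_eq_abs]
    gcongr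
  exact hasDerivAt_tsum_of_isPreconnected hu Metric.isOpen_ball
    (convex_ball 0 R).isPreconnected hterm_deriv hterm_bound ht h0 ht

theorem ExpTypeCoeffs.deriv_seriesSum (hc : ExpTypeCoeffs c) :
    deriv (seriesSum c) = seriesSum (derivCoeff c) :=
  funext fun t => (hc.hasDerivAt_seriesSum t).deriv

theorem ExpTypeCoeffs.differentiable_seriesSum (hc : ExpTypeCoeffs c) :
    Differentiable ℝ (seriesSum c) :=
  fun t => (hc.hasDerivAt_seriesSum t).differentiableAt

theorem ExpTypeCoeffs.differentiable_deriv_seriesSum (hc : ExpTypeCoeffs c) :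
    Differentiable ℝ (deriv (seriesSum c)) :=
  hc.deriv_seriesSum ▸ hc.expTypeCoeffs_derivCoeff.differentiable_seriesSum

theorem ExpTypeCoeffs.hasSum_mul_seriesSum_derivCoeff (hc : ExpTypeCoeffs c) (t : ℝ) :
    HasSum (fun n => n * c n * t ^ n) (t * seriesSum (derivCoeff c) t) := by
  have hshift : HasSum (fun n => ((n + 1 : ℕ) : ℝ) * c (n + 1) * t ^ (n + 1))
      (t * seriesSum (derivCoeff c) t) := by
    refine ((hc.expTypeCoeffs_derivCoeff.hasSum_seriesSum t).mul_left t).congr_fun fun n => ?_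
    simp only [derivCoeff]; push_cast; ring
  simpa using (hasSum_nat_add_iff (f := fun n : ℕ => (n : ℝ) * c n * t ^ n) 1).1 hshift

theorem ExpTypeCoeffs.seriesSum_reducedBessel (hc : ExpTypeCoeffs c) (t : ℝ) :
    t * deriv (deriv (seriesSum c)) t + deriv (seriesSum c) t + seriesSum c t =
      seriesSum (fun n => (n + 1) ^ 2 * c (n + 1) + c n) t := by
  have hdc := hc.expTypeCoeffs_derivCoeff
  rw [hc.deriv_seriesSum, hdc.deriv_seriesSum]
  refine (HasSum.tsum_eq ?_).symm
  refine (((hdc.hasSum_mul_seriesSum_derivCoeff t).add (hdc.hasSum_seriesSum t)).add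
    (hc.hasSum_seriesSum t)).congr_fun fun n => ?_
  simp only [derivCoeff]; ring

end PowerSeries

def SolvesBesselZeroAt (y : ℝ → ℝ) (x : ℝ) : Prop :=
  DifferentiableAt ℝ y x ∧ DifferentiableAt ℝ (deriv y) x ∧
    x * deriv (deriv y) x + deriv y x + x * y x = 0

def SolvesReducedBesselAt (w : ℝ → ℝ) (s : ℝ) : Prop :=
  DifferentiableAt ℝ w s ∧ DifferentiableAt ℝ (deriv w) s ∧
    s * deriv (deriv w) s + deriv w s + w s = 0

theorem SolvesReducedBesselAt.const_mul {w : ℝ → ℝ} {s : ℝ} (h : SolvesReducedBesselAt w s)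
    (a : ℝ) : SolvesReducedBesselAt (fun s => a * w s) s := by
  obtain ⟨hw, hw', hode⟩ := h
  refine ⟨hw.const_mul a, ?_, ?_⟩
  · rw [deriv_const_mul_field']
    exact hw'.const_mul a
  · rw [deriv_const_mul_field', deriv_const_mul_field']
    linear_combination a * hode

theorem solvesBesselZeroAt_comp_halfSq {w : ℝ → ℝ}
    (hw : ∀ s, 0 < s → SolvesReducedBesselAt w s) {x : ℝ} (hx : x ≠ 0) :
    SolvesBesselZeroAt (fun x => w ((x / 2) ^ 2)) x := by
  have hpos : ∀ t : ℝ, t ≠ 0 → 0 < (t / 2) ^ 2 := fun t ht => by positivity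
  have hsq : ∀ t : ℝ, HasDerivAt (fun t => (t / 2) ^ 2) (t / 2) t := fun t =>
    (((hasDerivAt_id' t).div_const 2).pow 2).congr_deriv (by ring)
  have hy : ∀ t ≠ 0,
      HasDerivAt (fun x => w ((x / 2) ^ 2)) (deriv w ((t / 2) ^ 2) * (t / 2)) t :=
    fun t ht => (hw _ (hpos t ht)).1.hasDerivAt.comp t (hsq t)
  have hderiv :
      deriv (fun x => w ((x / 2) ^ 2)) =ᶠ[𝓝 x] fun t => deriv w ((t / 2) ^ 2) * (t / 2) :=
    (eventually_ne_nhds hx).mono fun t ht => (hy t ht).deriv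
  have hw' : HasDerivAt (deriv w) (deriv (deriv w) ((x / 2) ^ 2)) ((x / 2) ^ 2) :=
    (hw _ (hpos x hx)).2.1.hasDerivAt
  have hy' : HasDerivAt (fun t => deriv w ((t / 2) ^ 2) * (t / 2))
      (deriv (deriv w) ((x / 2) ^ 2) * (x / 2) * (x / 2) + deriv w ((x / 2) ^ 2) * (1 / 2)) x :=
    (hw'.comp (h := fun t => (t / 2) ^ 2) x (hsq x)).mul ((hasDerivAt_id' x).div_const 2)
  refine ⟨(hy x hx).differentiableAt, hderiv.differentiableAt_iff.2 hy'.differentiableAt, ?_⟩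
  rw [hderiv.deriv_eq, hy'.deriv, (hy x hx).deriv]
  linear_combination x * (hw _ (hpos x hx)).2.2

theorem solvesReducedBesselAt_log_mul_sub {A B : ℝ → ℝ} (κ : ℝ) (hA : Differentiable ℝ A)
    (hA' : Differentiable ℝ (deriv A)) (hB : Differentiable ℝ B)
    (hB' : Differentiable ℝ (deriv B)) {s : ℝ} (hs : 0 < s)
    (hA_ode : s * deriv (deriv A) s + deriv A s + A s = 0)
    (hB_ode : s * deriv (deriv B) s + deriv B s + B s = deriv A s) :
    SolvesReducedBesselAt (fun s => (log s / 2 + κ) * A s - B s) s := by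
  have hlog : ∀ t ≠ 0, HasDerivAt (fun s => log s / 2 + κ) (t⁻¹ / 2) t := fun t ht =>
    ((hasDerivAt_log ht).div_const 2).add_const κ
  set W' := fun t => t⁻¹ / 2 * A t + (log t / 2 + κ) * deriv A t - deriv B t
  have hW : ∀ t ≠ 0, HasDerivAt (fun s => (log s / 2 + κ) * A s - B s) (W' t) t := fun t ht =>
    ((hlog t ht).mul (hA t).hasDerivAt).sub (hB t).hasDerivAt
  have hderiv : deriv (fun s => (log s / 2 + κ) * A s - B s) =ᶠ[𝓝 s] W' :=
    (eventually_ne_nhds hs.ne').mono fun t ht => (hW t ht).deriv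
  have hW' : HasDerivAt W' (-(s ^ 2)⁻¹ / 2 * A s + s⁻¹ / 2 * deriv A s +
      (s⁻¹ / 2 * deriv A s + (log s / 2 + κ) * deriv (deriv A) s) - deriv (deriv B) s) s :=
    ((((hasDerivAt_inv hs.ne').div_const 2).mul (hA s).hasDerivAt).add
      ((hlog s hs.ne').mul (hA' s).hasDerivAt)).sub (hB' s).hasDerivAt
  refine ⟨(hW s hs.ne').differentiableAt, hderiv.differentiableAt_iff.2 hW'.differentiableAt, ?_⟩
  rw [hderiv.deriv_eq, hW'.deriv, (hW s hs.ne').deriv]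
  have hinv : s * s⁻¹ = 1 := mul_inv_cancel₀ hs.ne'
  have hinv_sq : s * (s ^ 2)⁻¹ = s⁻¹ := by field_simp
  linear_combination (log s / 2 + κ) * hA_ode - hB_ode + deriv A s * hinv - A s / 2 * hinv_sq

def besselJ0Coeff (n : ℕ) : ℝ :=
  (-1) ^ n / (n ! : ℝ) ^ 2

def harmonicBesselCoeff (n : ℕ) : ℝ :=
  (-1) ^ n * harmonicPhi n / (n ! : ℝ) ^ 2

theorem harmonicPhi_succ (n : ℕ) : harmonicPhi (n + 1) = harmonicPhi n + 1 / (n + 1) :=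
  Finset.sum_range_succ _ n

theorem harmonicPhi_nonneg (n : ℕ) : 0 ≤ harmonicPhi n :=
  Finset.sum_nonneg fun m _ => by positivity

theorem harmonicPhi_le (n : ℕ) : harmonicPhi n ≤ n := by
  calc harmonicPhi n ≤ ∑ _m ∈ Finset.range n, (1 : ℝ) :=
        Finset.sum_le_sum fun m _ => by
          rw [div_le_one (by positivity)]
          linarith [m.cast_nonneg (α := ℝ)]
    _ = n := by simp

theorem expTypeCoeffs_besselJ0Coeff : ExpTypeCoeffs besselJ0Coeff := by
  refine ⟨1, 1, fun n => ?_⟩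
  have hfac : (1 : ℝ) ≤ n ! := by exact_mod_cast n.factorial_pos
  rw [besselJ0Coeff, abs_div, abs_pow, abs_neg, abs_one, one_pow, mul_one,
    abs_of_pos (by positivity), sq]
  exact div_le_div_of_nonneg_left zero_le_one (by positivity)
    (le_mul_of_one_le_left (by positivity) hfac)

theorem expTypeCoeffs_harmonicBesselCoeff : ExpTypeCoeffs harmonicBesselCoeff := by
  refine ⟨1, 1, fun n => ?_⟩
  have hphi : harmonicPhi n ≤ n ! :=
    (harmonicPhi_le n).trans (by exact_mod_cast n.self_le_factorial)
  rw [harmonicBesselCoeff, abs_div, abs_mul, abs_pow, abs_neg, abs_one, one_pow, one_mul,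
    mul_one, abs_of_nonneg (harmonicPhi_nonneg n), abs_of_pos (by positivity),
    div_le_div_iff₀ (by positivity) (by positivity), sq]
  nlinarith [Nat.cast_nonneg (α := ℝ) n !]

theorem besselJ0Coeff_recurrence (n : ℕ) :
    (n + 1) ^ 2 * besselJ0Coeff (n + 1) + besselJ0Coeff n = 0 := by
  simp only [besselJ0Coeff, Nat.factorial_succ]
  push_cast
  field_simp
  ring

theorem harmonicBesselCoeff_recurrence (n : ℕ) :
    (n + 1) ^ 2 * harmonicBesselCoeff (n + 1) + harmonicBesselCoeff n =
      derivCoeff besselJ0Coeff n := by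
  simp only [harmonicBesselCoeff, derivCoeff, besselJ0Coeff, harmonicPhi_succ, Nat.factorial_succ]
  push_cast
  field_simp
  ring

theorem besselJ0Coeff_mul_pow (x : ℝ) (n : ℕ) :
    besselJ0Coeff n * ((x / 2) ^ 2) ^ n =
      (-1) ^ n * x ^ (2 * n) / (2 ^ (2 * n) * (n ! : ℝ) ^ 2) := by
  rw [besselJ0Coeff, ← pow_mul, div_pow]
  ring

theorem harmonicBesselCoeff_mul_pow (x : ℝ) (n : ℕ) :
    harmonicBesselCoeff n * ((x / 2) ^ 2) ^ n =
      (-1) ^ n * harmonicPhi n * x ^ (2 * n) / (2 ^ (2 * n) * (n ! : ℝ) ^ 2) := by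
  rw [harmonicBesselCoeff, ← pow_mul, div_pow]
  ring

theorem seriesSum_besselJ0Coeff_reducedBessel (s : ℝ) :
    s * deriv (deriv (seriesSum besselJ0Coeff)) s + deriv (seriesSum besselJ0Coeff) s +
      seriesSum besselJ0Coeff s = 0 := by
  rw [expTypeCoeffs_besselJ0Coeff.seriesSum_reducedBessel]
  simp only [besselJ0Coeff_recurrence, seriesSum, zero_mul, tsum_zero]

theorem seriesSum_harmonicBesselCoeff_reducedBessel (s : ℝ) :
    s * deriv (deriv (seriesSum harmonicBesselCoeff)) s +
      deriv (seriesSum harmonicBesselCoeff) s + seriesSum harmonicBesselCoeff s =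
        deriv (seriesSum besselJ0Coeff) s := by
  rw [expTypeCoeffs_harmonicBesselCoeff.seriesSum_reducedBessel,
    expTypeCoeffs_besselJ0Coeff.deriv_seriesSum]
  simp only [harmonicBesselCoeff_recurrence]

theorem besselY0_eq (x : ℝ) :
    besselY0 x = 2 / π * ((log ((x / 2) ^ 2) / 2 + eulerMascheroniConstant) *
      seriesSum besselJ0Coeff ((x / 2) ^ 2) - seriesSum harmonicBesselCoeff ((x / 2) ^ 2)) := by
  simp only [besselY0, besselJ0, seriesSum, besselJ0Coeff_mul_pow, harmonicBesselCoeff_mul_pow,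
    Real.log_pow]
  push_cast
  ring

/-- Weber's Bessel function of order zero `Y₀` is well defined (its defining series
converges) and twice differentiable on `(0,∞)`, and satisfies Bessel's equation of
order zero: `x Y₀''(x) + Y₀'(x) + x Y₀(x) = 0` for all `x > 0`. -/
theorem besselY0_wellDefined_and_ode :
    (∀ x ∈ Set.Ioi (0 : ℝ), Summable fun n : ℕ =>
      (-1 : ℝ) ^ n * harmonicPhi n * x ^ (2 * n) / (2 ^ (2 * n) * ((n.factorial : ℝ)) ^ 2)) ∧
    (∀ x ∈ Set.Ioi (0 : ℝ), DifferentiableAt ℝ besselY0 x) ∧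
    (∀ x ∈ Set.Ioi (0 : ℝ), DifferentiableAt ℝ (deriv besselY0) x) ∧
    (∀ x ∈ Set.Ioi (0 : ℝ),
      x * deriv (deriv besselY0) x + deriv besselY0 x + x * besselY0 x = 0) := by
  have ha := expTypeCoeffs_besselJ0Coeff
  have hb := expTypeCoeffs_harmonicBesselCoeff
  have hreduced : ∀ s, 0 < s → SolvesReducedBesselAt (fun s => 2 / π *
      ((log s / 2 + eulerMascheroniConstant) * seriesSum besselJ0Coeff s -
        seriesSum harmonicBesselCoeff s)) s := fun s hs =>
    (solvesReducedBesselAt_log_mul_sub _ ha.differentiable_seriesSum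
      ha.differentiable_deriv_seriesSum hb.differentiable_seriesSum
      hb.differentiable_deriv_seriesSum hs (seriesSum_besselJ0Coeff_reducedBessel s)
      (seriesSum_harmonicBesselCoeff_reducedBessel s)).const_mul _
  have hsol : ∀ x : ℝ, 0 < x → SolvesBesselZeroAt besselY0 x := fun x hx => by
    rw [funext besselY0_eq]
    exact solvesBesselZeroAt_comp_halfSq hreduced hx.ne'
  refine ⟨fun x _ => ?_, fun x hx => (hsol x hx).1, fun x hx => (hsol x hx).2.1,
    fun x hx => (hsol x hx).2.2⟩
  exact (hb.hasSum_seriesSum ((x / 2) ^ 2)).summable.congr (harmonicBesselCoeff_mul_pow x)
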